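/- arXiv:0810.5578 — 4 statements merged into one kernel-verified Lean document; each statement's English description precedes it below -/
import Mathlib

section
/- A graph G is (2,1)-anonymous if and only if every vertex u of G either (a) is part of a triangle, (b) is adjacent to a vertex of degree at least 3, or (c) is the middle vertex of a path of 5 vertices. -/
/-!
Call `x` a co-neighbour of `u` if `x ≠ u` and the two share a neighbour. A triangle `uvw` makes
`v, w` co-neighbours of `u`; a neighbour `v` of `u` with two further neighbours `x, y` makes `x, y`
co-neighbours; a path `a b u c d` makes `a, d` co-neighbours. Conversely, take distinct
co-neighbours `x, y` of `u` through shared neighbours `b` and `c`. If `b = c`, then `b` has the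
three neighbours `u, x, y`. Otherwise `x b u c y` is a path on 5 vertices unless `x = c`, `y = b`
or `bc` is an edge, and each of these closes a triangle on `u`.
-/

theorem Finset.exists_notMem_two_le_card_forall_iff {α : Type*} (p : α → Prop) (a : α) :
    (∃ s : Finset α, a ∉ s ∧ 2 ≤ s.card ∧ ∀ x ∈ s, p x) ↔
      ∃ x y, x ≠ y ∧ x ≠ a ∧ y ≠ a ∧ p x ∧ p y := by
  classical
  constructor
  · rintro ⟨s, has, hcard, hp⟩
    obtain ⟨x, hx, y, hy, hxy⟩ := Finset.one_lt_card.mp hcard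
    exact ⟨x, y, hxy, ne_of_mem_of_not_mem hx has, ne_of_mem_of_not_mem hy has, hp x hx, hp y hy⟩
  · rintro ⟨x, y, hxy, hxa, hya, hpx, hpy⟩
    refine ⟨{x, y}, by simp [hxa.symm, hya.symm], (Finset.card_pair hxy).ge, ?_⟩
    simp only [Finset.mem_insert, Finset.mem_singleton, forall_eq_or_imp, forall_eq]
    exact ⟨hpx, hpy⟩

namespace SimpleGraph

variable {V : Type*} (G : SimpleGraph V)

def HasTwoCoNeighbours (u : V) : Prop :=
  ∃ x y, x ≠ y ∧ x ≠ u ∧ y ≠ u ∧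
    (G.commonNeighbors u x).Nonempty ∧ (G.commonNeighbors u y).Nonempty

variable {G} {u v w a b c d : V}

theorem hasTwoCoNeighbours_of_triangle (huv : G.Adj u v) (hvw : G.Adj v w) (huw : G.Adj u w) :
    G.HasTwoCoNeighbours u :=
  ⟨v, w, hvw.ne, huv.ne', huw.ne', ⟨w, huw, hvw⟩, ⟨v, huv, hvw.symm⟩⟩

theorem hasTwoCoNeighbours_of_adj_of_two_lt_ncard (huv : G.Adj u v)
    (hdeg : 2 < (G.neighborSet v).ncard) : G.HasTwoCoNeighbours u := by
  have hfin : (G.neighborSet v \ {u}).Finite :=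
    (Set.finite_of_ncard_pos (by omega)).sdiff
  have hlt : 1 < (G.neighborSet v \ {u}).ncard := by
    have := Set.pred_ncard_le_ncard_sdiff_singleton (G.neighborSet v) u
    omega
  obtain ⟨x, y, ⟨hxv, hxu⟩, ⟨hyv, hyu⟩, hxy⟩ := (Set.one_lt_ncard_iff hfin).mp hlt
  exact ⟨x, y, hxy, hxu, hyu, ⟨v, huv, Adj.symm hxv⟩, ⟨v, huv, Adj.symm hyv⟩⟩

theorem hasTwoCoNeighbours_of_path (hab : G.Adj a b) (hbu : G.Adj b u) (huc : G.Adj u c)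
    (hcd : G.Adj c d) (had : a ≠ d) (hau : a ≠ u) (hdu : d ≠ u) : G.HasTwoCoNeighbours u :=
  ⟨a, d, had, hau, hdu, ⟨b, hbu.symm, hab⟩, ⟨c, huc, hcd.symm⟩⟩

theorem two_lt_ncard_neighborSet [G.LocallyFinite] (ha : G.Adj v a) (hb : G.Adj v b)
    (hc : G.Adj v c) (hab : a ≠ b) (hac : a ≠ c) (hbc : b ≠ c) : 2 < (G.neighborSet v).ncard :=
  (Set.two_lt_ncard_iff).mpr ⟨a, b, c, ha, hb, hc, hab, hac, hbc⟩

theorem HasTwoCoNeighbours.triangle_or_two_lt_or_path [G.LocallyFinite]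
    (h : G.HasTwoCoNeighbours u) :
    (∃ v w, G.Adj u v ∧ G.Adj v w ∧ G.Adj u w) ∨
      (∃ v, G.Adj u v ∧ 2 < (G.neighborSet v).ncard) ∨
      ∃ a b c d, [a, b, u, c, d].Nodup ∧ G.Adj a b ∧ G.Adj b u ∧ G.Adj u c ∧ G.Adj c d := by
  obtain ⟨x, y, hxy, hxu, hyu, ⟨b, hub, hxb⟩, ⟨c, huc, hyc⟩⟩ := h
  by_cases hbc : b = c
  · subst hbc
    exact .inr <| .inl ⟨b, hub, two_lt_ncard_neighborSet hub.symm hxb.symm hyc.symm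
      hxu.symm hyu.symm hxy⟩
  by_cases hbc' : G.Adj b c
  · exact .inl ⟨b, c, hub, hbc', huc⟩
  by_cases hxc : x = c
  · subst hxc
    exact .inl ⟨b, x, hub, hxb.symm, huc⟩
  by_cases hyb : y = b
  · subst hyb
    exact .inl ⟨c, y, huc, hyc.symm, hub⟩
  refine .inr <| .inr ⟨x, b, c, y, ?_, hxb, hub.symm, huc, hyc.symm⟩
  simp [hxb.ne, hxu, hxc, hxy, hub.ne', hbc, Ne.symm hyb, huc.ne, hyu.symm, hyc.ne']

theorem hasTwoCoNeighbours_iff [G.LocallyFinite] :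
    G.HasTwoCoNeighbours u ↔
      (∃ v w, G.Adj u v ∧ G.Adj v w ∧ G.Adj u w) ∨
      (∃ v, G.Adj u v ∧ 3 ≤ (G.neighborSet v).ncard) ∨
      ∃ a b c d, [a, b, u, c, d].Nodup ∧ G.Adj a b ∧ G.Adj b u ∧ G.Adj u c ∧ G.Adj c d := by
  refine ⟨HasTwoCoNeighbours.triangle_or_two_lt_or_path, ?_⟩
  rintro (⟨v, w, huv, hvw, huw⟩ | ⟨v, huv, hdeg⟩ | ⟨a, b, c, d, hnd, hab, hbu, huc, hcd⟩)
  · exact hasTwoCoNeighbours_of_triangle huv hvw huw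
  · exact hasTwoCoNeighbours_of_adj_of_two_lt_ncard huv hdeg
  · simp only [List.nodup_cons, List.mem_cons, List.not_mem_nil, or_false, not_or] at hnd
    obtain ⟨⟨-, hau, -, had⟩, -, ⟨-, hud⟩, -⟩ := hnd
    exact hasTwoCoNeighbours_of_path hab hbu huc hcd had hau (Ne.symm hud)

end SimpleGraph

/-- A graph is `(2,1)`-anonymous iff every vertex `u` is part of a triangle, is adjacent
to a vertex of degree at least 3, or is the middle vertex of a path on 5 vertices. -/
theorem two_one_anonymous_characterization {V : Type*} [Fintype V] (G : SimpleGraph V) :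
    (∀ u : V, ∃ U : Finset V, u ∉ U ∧ 2 ≤ U.card ∧
        ∀ x ∈ U, (G.neighborSet u ∩ G.neighborSet x).Nonempty) ↔
    (∀ u : V,
      (∃ v w : V, G.Adj u v ∧ G.Adj v w ∧ G.Adj u w) ∨
      (∃ v : V, G.Adj u v ∧ 3 ≤ (G.neighborSet v).ncard) ∨
      (∃ a b c d : V, [a, b, u, c, d].Nodup ∧
        G.Adj a b ∧ G.Adj b u ∧ G.Adj u c ∧ G.Adj c d)) := by
  classical
  refine forall_congr' fun u => ?_
  rw [Finset.exists_notMem_two_le_card_forall_iff]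
  exact G.hasTwoCoNeighbours_iff
end

section
/- Adding a single edge uv to a graph G decreases the total residual anonymity r(G) (with respect to the weak (k,1)-anonymity requirement) by at most 4k. Specifically, if G' = G + uv, then r(G) − r(G') ≤ 4k. -/
/-!
Adding `uv` can only create new sharing pairs through the new edge itself: a vertex
`w ∉ {u, v}` gains at most the partners `u` (if `w ~ v`) and `v` (if `w ~ u`). Such a gain
lowers the residual of `w` only if `w` was deficient, and a vertex `x` has at most `k`
deficient neighbours, because each neighbour `w` of `x` shares `x` with all other neighbours
of `x`, so `deg x ≤ k'(w) + 1`. Hence the vertices other than `u, v` lose at most `2k`,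
and `u`, `v` themselves lose at most `k` each.
-/

open scoped Classical in
/-- The number of vertices other than `v` sharing at least one neighbor with `v`. -/
noncomputable def sharingCount {V : Type*} [Fintype V] (G : SimpleGraph V) (v : V) : ℕ :=
  (Finset.univ.filter
    (fun u => u ≠ v ∧ (G.neighborSet v ∩ G.neighborSet u).Nonempty)).card

/-- The total residual anonymity of `G` for the weak `(k,1)`-requirement:
`r(G) = ∑_v max(k - k'(v), 0)`. -/
noncomputable def totalResidual {V : Type*} [Fintype V] (G : SimpleGraph V) (k : ℕ) : ℕ :=
  ∑ v : V, (k - sharingCount G v)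

open Finset

open scoped Classical

noncomputable def sharingSet {V : Type*} [Fintype V] (G : SimpleGraph V) (v : V) : Finset V :=
  {u | u ≠ v ∧ (G.neighborSet v ∩ G.neighborSet u).Nonempty}

section

variable {V : Type*} [Fintype V] (G : SimpleGraph V)

theorem card_sharingSet (v : V) : #(sharingSet G v) = sharingCount G v := rfl

theorem mem_sharingSet {v x : V} : x ∈ sharingSet G v ↔ x ≠ v ∧ ∃ y, G.Adj v y ∧ G.Adj x y := by
  simp [sharingSet, Set.Nonempty]

theorem degree_le_sharingCount_add_one [DecidableRel G.Adj] {x w : V} (h : G.Adj x w) :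
    G.degree x ≤ sharingCount G w + 1 := by
  have hsub : G.neighborFinset x \ {w} ⊆ sharingSet G w := fun y hy => by
    rw [mem_sdiff, SimpleGraph.mem_neighborFinset, mem_singleton] at hy
    exact (mem_sharingSet G).2 ⟨hy.2, x, h.symm, hy.1.symm⟩
  have := card_le_card hsub
  rw [card_sdiff_of_subset (by simpa using h), card_singleton, card_sharingSet,
    SimpleGraph.card_neighborFinset_eq_degree] at this
  omega

theorem card_deficient_neighbors_le (k : ℕ) (x : V) :
    #{w | G.Adj x w ∧ sharingCount G w < k} ≤ k := by
  obtain h | ⟨w, hw⟩ := eq_empty_or_nonempty ({w | G.Adj x w ∧ sharingCount G w < k} : Finset V)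
  · simp [h]
  obtain ⟨hxw, hdef⟩ := (mem_filter.1 hw).2
  calc #{w | G.Adj x w ∧ sharingCount G w < k}
      ≤ G.degree x := card_le_card fun y hy => by simpa using (mem_filter.1 hy).2.1
    _ ≤ k := by have := degree_le_sharingCount_add_one G hxw; omega

theorem sharingSet_sup_edge_subset {u v w : V} (hwu : w ≠ u) (hwv : w ≠ v) :
    sharingSet (G ⊔ SimpleGraph.fromEdgeSet {s(u, v)}) w ⊆
      sharingSet G w ∪ (if G.Adj u w then {v} else ∅) ∪ (if G.Adj v w then {u} else ∅) := by
  intro x hx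
  obtain ⟨hxw, y, hwy, hxy⟩ := (mem_sharingSet _).1 hx
  replace hwy : G.Adj w y := by
    simpa [SimpleGraph.fromEdgeSet_adj, hwu, hwv] using hwy
  simp only [SimpleGraph.sup_adj, SimpleGraph.fromEdgeSet_adj, Set.mem_singleton_iff,
    Sym2.eq_iff] at hxy
  rcases hxy with hxy | ⟨⟨rfl, rfl⟩ | ⟨rfl, rfl⟩, -⟩
  · simp [(mem_sharingSet G).2 ⟨hxw, y, hwy, hxy⟩]
  · simp [hwy.symm]
  · simp [hwy.symm]

theorem sharingCount_sup_edge_le {u v w : V} (hwu : w ≠ u) (hwv : w ≠ v) :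
    sharingCount (G ⊔ SimpleGraph.fromEdgeSet {s(u, v)}) w ≤
      sharingCount G w + (if G.Adj u w then 1 else 0) + (if G.Adj v w then 1 else 0) := by
  refine (card_le_card (sharingSet_sup_edge_subset G hwu hwv)).trans ?_
  refine (card_union_le _ _).trans (add_le_add ((card_union_le _ _).trans ?_) ?_) <;>
    split_ifs <;> simp [card_sharingSet]

theorem residual_sup_edge_drop_le (k : ℕ) (u v w : V) :
    (k - sharingCount G w) - (k - sharingCount (G ⊔ SimpleGraph.fromEdgeSet {s(u, v)}) w) ≤
      (if w ∈ ({u, v} : Finset V) then k else 0) +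
        (if G.Adj u w ∧ sharingCount G w < k then 1 else 0) +
        (if G.Adj v w ∧ sharingCount G w < k then 1 else 0) := by
  by_cases hw : w ∈ ({u, v} : Finset V)
  · simp only [hw, if_true]
    omega
  obtain ⟨hwu, hwv⟩ : w ≠ u ∧ w ≠ v := by simpa [not_or] using hw
  by_cases hdef : sharingCount G w < k
  · have := sharingCount_sup_edge_le G hwu hwv
    simp only [hw, hdef, and_true, if_false, zero_add]
    split_ifs at this ⊢ <;> omega
  · omega

end

theorem add_edge_residual_drop_le_general {V : Type*} [Fintype V] (G : SimpleGraph V) (k : ℕ)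
    (u v : V) :
    totalResidual G k - totalResidual (G ⊔ SimpleGraph.fromEdgeSet {s(u, v)}) k
      ≤ 4 * k := by
  set G' := G ⊔ SimpleGraph.fromEdgeSet {s(u, v)}
  have hsum : totalResidual G k ≤
      totalResidual G' k + ∑ w, ((k - sharingCount G w) - (k - sharingCount G' w)) := by
    rw [totalResidual, totalResidual, ← sum_add_distrib]
    exact sum_le_sum fun w _ => le_add_tsub
  calc totalResidual G k - totalResidual G' k
      ≤ ∑ w, ((k - sharingCount G w) - (k - sharingCount G' w)) := tsub_le_iff_left.2 hsum
    _ ≤ ∑ w, ((if w ∈ ({u, v} : Finset V) then k else 0) +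
          (if G.Adj u w ∧ sharingCount G w < k then 1 else 0) +
          (if G.Adj v w ∧ sharingCount G w < k then 1 else 0)) :=
        sum_le_sum fun w _ => residual_sup_edge_drop_le G k u v w
    _ = #{u, v} * k + #{w | G.Adj u w ∧ sharingCount G w < k} +
          #{w | G.Adj v w ∧ sharingCount G w < k} := by
        rw [sum_add_distrib, sum_add_distrib, sum_ite_mem, univ_inter, sum_const, smul_eq_mul,
          card_filter, card_filter]
    _ ≤ 2 * k + k + k := by
        gcongr
        · exact card_le_two
        · exact card_deficient_neighbors_le G k u
        · exact card_deficient_neighbors_le G k v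
    _ = 4 * k := by ring

/-- Adding a single edge `uv` decreases the total residual anonymity (for the weak
`(k,1)`-requirement) by at most `4k`. -/
theorem add_edge_residual_drop_le {V : Type*} [Fintype V] (G : SimpleGraph V) (k : ℕ)
    (hk : 1 ≤ k) (u v : V) (huv : u ≠ v) :
    totalResidual G k - totalResidual (G ⊔ SimpleGraph.fromEdgeSet {s(u, v)}) k
      ≤ 4 * k :=
  add_edge_residual_drop_le_general G k u v
end

section
/- In the bipartite graph construction from an instance of 1-in-3 satisfiability with 6m triples (each variable in exactly 3 triples), each added edge between two variable-vertices can decrease the total residual anonymity of the triple-vertices by at most 6; hence at least m edges are needed to raise all 6m triple-vertices from (6,1)- to (7,1)-anonymity. -/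
open scoped Classical in
/-- The number of vertices at distance exactly 2 from `v` (sharing a neighbor with `v`). -/
noncomputable def twoNbhdCount {V : Type*} [Fintype V] (G : SimpleGraph V) (v : V) : ℕ :=
  (Finset.univ.filter
    (fun w => w ≠ v ∧ (G.neighborSet v ∩ G.neighborSet w).Nonempty)).card

/-! The residual `∑ u ∈ U, (7 - twoNbhdCount G u)` starts at `|U| = 6 m`. Adding an edge `xy`
between two vertices outside `U` can only create new distance-two pairs `(u, y)` with `u ~ x`
or `(u, x)` with `u ~ y`, so when `x` and `y` each have at most three neighbours in `U`, the
total `∑ u ∈ U, twoNbhdCount G u` grows by at most `6` per edge: the residual drops by at most `6`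
per edge, and at least `m` edges are needed. -/

lemma le_add_nsmul_of_forall_lt_succ_le_add {M : Type*} [AddCommMonoid M] [PartialOrder M]
    [IsOrderedAddMonoid M] {S : ℕ → M} {c : M} {T : ℕ}
    (h : ∀ i < T, S (i + 1) ≤ S i + c) : S T ≤ S 0 + T • c := by
  induction T with
  | zero => simp
  | succ T ih =>
    calc S (T + 1) ≤ S T + c := h T T.lt_succ_self
      _ ≤ S 0 + T • c + c := by grw [ih fun i hi => h i (hi.trans T.lt_succ_self)]
      _ = S 0 + (T + 1) • c := by rw [succ_nsmul, add_assoc]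

namespace SimpleGraph

variable {V : Type*} (G : SimpleGraph V) {x y u : V}

lemma sup_edge_adj_of_ne_of_ne (hux : u ≠ x) (huy : u ≠ y) (z : V) :
    (G ⊔ edge x y).Adj u z ↔ G.Adj u z := by
  simp only [sup_adj, edge_adj]
  exact ⟨fun h => h.resolve_right (by rintro ⟨(⟨rfl, -⟩ | ⟨rfl, -⟩), -⟩ <;> contradiction),
    Or.inl⟩

lemma card_filter_adj_eq_ncard (U : Finset V) (x : V) [DecidablePred (G.Adj · x)] :
    (U.filter (G.Adj · x)).card = (G.neighborSet x ∩ U).ncard := by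
  rw [← Set.ncard_coe_finset]
  congr 1
  ext u
  simp [adj_comm, and_comm]

variable [Fintype V] [DecidableRel G.Adj]

lemma twoNbhdCount_sup_edge_le (hux : u ≠ x) (huy : u ≠ y) :
    twoNbhdCount (G ⊔ edge x y) u ≤
      twoNbhdCount G u + ((if G.Adj u x then 1 else 0) + if G.Adj u y then 1 else 0) := by
  classical
  have hsub : (Finset.univ.filter fun w =>
        w ≠ u ∧ ((G ⊔ edge x y).neighborSet u ∩ (G ⊔ edge x y).neighborSet w).Nonempty) ⊆
      (Finset.univ.filter fun w => w ≠ u ∧ (G.neighborSet u ∩ G.neighborSet w).Nonempty) ∪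
        ((if G.Adj u x then {y} else ∅) ∪ if G.Adj u y then {x} else ∅) := by
    intro w hw
    simp only [Finset.mem_filter, Finset.mem_univ, true_and] at hw
    obtain ⟨hwu, z, huz, hwz⟩ := hw
    rw [mem_neighborSet, G.sup_edge_adj_of_ne_of_ne hux huy] at huz
    rw [mem_neighborSet, sup_adj, edge_adj] at hwz
    rcases hwz with hwz | ⟨(⟨rfl, rfl⟩ | ⟨rfl, rfl⟩), -⟩
    · exact Finset.mem_union_left _ <| by simpa using ⟨hwu, z, huz, hwz⟩
    · simp [huz]
    · simp [huz]
  have hcard (p : Prop) [Decidable p] (a : V) :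
      (if p then ({a} : Finset V) else ∅).card = if p then 1 else 0 := by
    split_ifs <;> rfl
  unfold twoNbhdCount
  calc _ ≤ _ := Finset.card_le_card hsub
    _ ≤ _ := Finset.card_union_le _ _
    _ ≤ _ := Nat.add_le_add_left (Finset.card_union_le _ _) _
    _ = _ := by rw [hcard, hcard]

variable {G} in
lemma sum_twoNbhdCount_sup_edge_le {U : Finset V} (hx : x ∉ U) (hy : y ∉ U) :
    ∑ u ∈ U, twoNbhdCount (G ⊔ edge x y) u ≤
      ∑ u ∈ U, twoNbhdCount G u + ((G.neighborSet x ∩ U).ncard + (G.neighborSet y ∩ U).ncard) := by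
  calc _ ≤ ∑ u ∈ U, (twoNbhdCount G u +
          ((if G.Adj u x then 1 else 0) + if G.Adj u y then 1 else 0)) :=
        Finset.sum_le_sum fun u hu =>
          G.twoNbhdCount_sup_edge_le (ne_of_mem_of_not_mem hu hx) (ne_of_mem_of_not_mem hu hy)
    _ = _ := by
      simp only [Finset.sum_add_distrib, Finset.sum_boole, Nat.cast_id, card_filter_adj_eq_ncard]

end SimpleGraph

/-- In the bipartite reduction from 1-in-3 SAT, `U` is the set of `6m` triple-vertices,
each initially having exactly 6 vertices at distance 2 (i.e., `(6,1)`- but not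
`(7,1)`-anonymous).  Each added edge joins two variable-vertices having at most 3
neighbors in `U`, so it can decrease the total residual anonymity of the
triple-vertices by at most 6.  Hence if after `T` edge additions every triple-vertex
has at least 7 vertices at distance 2, then `T ≥ m`. -/
theorem reduction_edge_lower_bound {V : Type*} [Fintype V] (m T : ℕ) (U : Finset V)
    (hU : U.card = 6 * m) (G : ℕ → SimpleGraph V)
    (hstep : ∀ i < T, ∃ x y : V, x ∉ U ∧ y ∉ U ∧ x ≠ y ∧
      ((G i).neighborSet x ∩ (U : Set V)).ncard ≤ 3 ∧
      ((G i).neighborSet y ∩ (U : Set V)).ncard ≤ 3 ∧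
      G (i + 1) = G i ⊔ SimpleGraph.fromEdgeSet {s(x, y)})
    (hinit : ∀ u ∈ U, twoNbhdCount (G 0) u = 6)
    (hfinal : ∀ u ∈ U, 7 ≤ twoNbhdCount (G T) u) :
    m ≤ T := by
  classical
  have hS := le_add_nsmul_of_forall_lt_succ_le_add
    (S := fun i => ∑ u ∈ U, twoNbhdCount (G i) u) (c := 6) fun i hi => by
      obtain ⟨x, y, hx, hy, -, hxU, hyU, hG⟩ := hstep i hi
      have := hG ▸ SimpleGraph.sum_twoNbhdCount_sup_edge_le (G := G i) hx hy
      omega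
  have hS0 : ∑ u ∈ U, twoNbhdCount (G 0) u = 6 * m * 6 := by
    rw [Finset.sum_congr rfl hinit, Finset.sum_const, hU, smul_eq_mul]
  have hST : 6 * m * 7 ≤ ∑ u ∈ U, twoNbhdCount (G T) u := by
    simpa [hU] using Finset.card_nsmul_le_sum U _ 7 hfinal
  simp only [smul_eq_mul] at hS
  omega
end

section
/- In the graph consisting of a k-clique together with two extra vertices x and y joined only by the edge xy, connecting both x and y to a single clique vertex u yields a (k−1, 1)-anonymous graph. -/
/-- The graph on a `k`-clique `Fin k` together with two extra vertices `x = Sum.inr 0`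
and `y = Sum.inr 1`, with edges `xy`, `xu`, `yu` where `u = Sum.inl 0` is a fixed
clique vertex, and no other edges incident to `x, y`. -/
def cliqueWithPendantPair (k : ℕ) : SimpleGraph (Fin k ⊕ Fin 2) where
  Adj a b :=
    match a, b with
    | Sum.inl i, Sum.inl j => i ≠ j
    | Sum.inl i, Sum.inr _ => i.val = 0
    | Sum.inr _, Sum.inl j => j.val = 0
    | Sum.inr a, Sum.inr b => a ≠ b
  symm := ⟨by rintro (i | a) (j | b) h <;> simp_all <;> exact fun e => h e.symm⟩
  loopless := ⟨by rintro (i | a) h <;> simp_all⟩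

/-! Since `k ≥ 3`, any two clique vertices have a common neighbour in a clique vertex different
from both, so a clique vertex has the other `k - 1` clique vertices as witnesses. Each of `x, y`
shares the other one with `u`, and shares `u` with every other clique vertex, so it has all `k`
clique vertices as witnesses. -/

theorem Fintype.exists_ne_ne_of_two_lt_card {α : Type*} [Fintype α] [DecidableEq α]
    (h : 2 < Fintype.card α) (a b : α) : ∃ c, c ≠ a ∧ c ≠ b := by
  have hcard : 1 < (Finset.univ.erase a).card := by
    rw [Finset.card_erase_of_mem (Finset.mem_univ a), Finset.card_univ]
    omega
  obtain ⟨c, hc, hcb⟩ := Finset.exists_mem_ne hcard b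
  exact ⟨c, Finset.ne_of_mem_erase hc, hcb⟩

namespace cliqueWithPendantPair

open SimpleGraph

variable {k : ℕ}

theorem adj_inl_inl {i j : Fin k} : (cliqueWithPendantPair k).Adj (.inl i) (.inl j) ↔ i ≠ j :=
  Iff.rfl

theorem adj_inl_inr {i : Fin k} {a : Fin 2} :
    (cliqueWithPendantPair k).Adj (.inl i) (.inr a) ↔ i.val = 0 :=
  Iff.rfl

theorem adj_inr_inl {a : Fin 2} {j : Fin k} :
    (cliqueWithPendantPair k).Adj (.inr a) (.inl j) ↔ j.val = 0 :=
  Iff.rfl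

theorem adj_inr_inr {a b : Fin 2} : (cliqueWithPendantPair k).Adj (.inr a) (.inr b) ↔ a ≠ b :=
  Iff.rfl

theorem commonNeighbors_inl_inl_nonempty (hk : 3 ≤ k) (i j : Fin k) :
    ((cliqueWithPendantPair k).commonNeighbors (.inl i) (.inl j)).Nonempty := by
  obtain ⟨l, hli, hlj⟩ := Fintype.exists_ne_ne_of_two_lt_card (by simp; omega) i j
  exact ⟨.inl l, (mem_commonNeighbors _).2 ⟨adj_inl_inl.2 hli.symm, adj_inl_inl.2 hlj.symm⟩⟩

theorem commonNeighbors_inr_inl_nonempty (hk : 0 < k) (a : Fin 2) (j : Fin k) :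
    ((cliqueWithPendantPair k).commonNeighbors (.inr a) (.inl j)).Nonempty := by
  by_cases hj : j.val = 0
  · refine ⟨.inr (a + 1), (mem_commonNeighbors _).2 ⟨?_, adj_inl_inr.2 hj⟩⟩
    exact adj_inr_inr.2 (by simp)
  · refine ⟨.inl ⟨0, hk⟩, (mem_commonNeighbors _).2 ⟨adj_inr_inl.2 rfl, ?_⟩⟩
    exact adj_inl_inl.2 fun h => hj (congrArg Fin.val h)

end cliqueWithPendantPair

/-- Connecting both extra vertices `x` and `y` to a single clique vertex `u` yields a
`(k-1, 1)`-anonymous graph (for `k ≥ 3`). -/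
theorem clique_with_pair_anonymous (k : ℕ) (hk : 3 ≤ k) :
    ∀ v : Fin k ⊕ Fin 2, ∃ U : Finset (Fin k ⊕ Fin 2), v ∉ U ∧ k - 1 ≤ U.card ∧
      ∀ w ∈ U, ((cliqueWithPendantPair k).neighborSet v ∩
        (cliqueWithPendantPair k).neighborSet w).Nonempty := by
  rintro (i | a)
  · refine ⟨(Finset.univ.erase i).map .inl, by simp, ?_, ?_⟩
    · simp [Finset.card_erase_of_mem]
    · simp only [Finset.mem_map, Function.Embedding.inl_apply]
      rintro _ ⟨j, -, rfl⟩
      exact cliqueWithPendantPair.commonNeighbors_inl_inl_nonempty hk i j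
  · refine ⟨Finset.univ.map .inl, by simp, by simp, ?_⟩
    simp only [Finset.mem_map, Function.Embedding.inl_apply]
    rintro _ ⟨j, -, rfl⟩
    exact cliqueWithPendantPair.commonNeighbors_inr_inl_nonempty (by omega) a j
end
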